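/- arXiv:2305.06132 — 2 statements merged into one kernel-verified Lean document; each statement's English description precedes it below -/
import Mathlib

section
/- Maclaurin's inequality: if λ = (λ₁,…,λₙ) ∈ ℝⁿ lies in the m-convex cone Γᵐ (i.e. S₁(λ) > 0, …, Sₘ(λ) > 0), then for all 1 ≤ j ≤ i ≤ m one has (Sⱼ(λ)/C(n,j))^(1/j) ≥ (Sᵢ(λ)/C(n,i))^(1/i). -/
/-- The `k`-th elementary symmetric polynomial of `lam : Fin n → ℝ`. -/
noncomputable def symmS (n k : ℕ) (lam : Fin n → ℝ) : ℝ :=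
  ∑ A ∈ Finset.powersetCard k (Finset.univ : Finset (Fin n)), ∏ i ∈ A, lam i

/-- The `m`-convex cone `Γᵐ ⊂ ℝⁿ`. -/
def GammaCone (n m : ℕ) : Set (Fin n → ℝ) :=
  {lam | ∀ k, 1 ≤ k → k ≤ m → 0 < symmS n k lam}

/-!
Newton's inequalities `E k * E (k + 2) ≤ E (k + 1) ^ 2` hold for the normalized means
`E k = e_k / C(n, k)` of any `n` real numbers. By Rolle, the derivative of `∏ (X - a)` again has
only real roots, and these have the same means `E 0, …, E (n - 1)`; so it suffices to treat
`n = k + 2`. There, passing to reciprocals reverses the sequence of means and reduces the claim to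
`k = 0`, which is the Cauchy–Schwarz inequality `(∑ a)² ≤ n ∑ a²`.

On `Γᵐ` the means `E 0 = 1, E 1, …, E m` are positive, and log-concavity then gives
`E (k + 1) ^ k ≤ E k ^ (k + 1)`, i.e. `E k ^ (1 / k)` decreases.
-/

open Polynomial

theorem Polynomial.Splits.derivative {p : ℝ[X]} (hp : p.Splits) : p.derivative.Splits := by
  rw [splits_iff_card_roots] at hp ⊢
  have := card_roots_le_derivative p
  have := card_roots' p.derivative
  rw [natDegree_derivative] at *
  omega

namespace Multiset

section CommSemiring

variable {R : Type*} [CommSemiring R]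

theorem esymm_zero (s : Multiset R) : s.esymm 0 = 1 := by
  simp [esymm]

theorem esymm_one (s : Multiset R) : s.esymm 1 = s.sum := by
  simp [esymm, powersetCard_one, map_map]

theorem esymm_cons (a : R) (s : Multiset R) (k : ℕ) :
    (a ::ₘ s).esymm (k + 1) = s.esymm (k + 1) + a * s.esymm k := by
  simp only [esymm, powersetCard_cons, map_add, sum_add, map_map, Function.comp_def, prod_cons,
    sum_map_mul_left]

theorem esymm_eq_zero_of_card_lt {s : Multiset R} {k : ℕ} (h : card s < k) : s.esymm k = 0 := by
  simp [esymm, powersetCard_eq_empty _ h]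

theorem esymm_card (s : Multiset R) : s.esymm (card s) = s.prod := by
  induction s using Multiset.induction_on with
  | empty => simp [esymm]
  | cons a s ih =>
    rw [card_cons, esymm_cons, esymm_eq_zero_of_card_lt (Nat.lt_succ_self _), ih, prod_cons,
      zero_add]

end CommSemiring

theorem sq_sum_eq_sum_sq_add_two_mul_esymm_two {R : Type*} [CommRing R] (s : Multiset R) :
    s.sum ^ 2 = (s.map (· ^ 2)).sum + 2 * s.esymm 2 := by
  induction s using Multiset.induction_on with
  | empty => simp [esymm, powersetCard_zero_right]
  | cons a s ih =>
    rw [sum_cons, map_cons, sum_cons, esymm_cons, esymm_one]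
    linear_combination ih

theorem sq_sum_le_card_mul_sum_sq (s : Multiset ℝ) :
    s.sum ^ 2 ≤ card s * (s.map (· ^ 2)).sum := by
  have hsum (f : ℝ → ℝ) : (s.map f).sum = ∑ x ∈ s.toEnumFinset, f x.1 := by
    conv_lhs => rw [← s.map_toEnumFinset_fst]
    rw [map_map]
    rfl
  have h := _root_.sq_sum_le_card_mul_sum_sq (s := s.toEnumFinset) (f := Prod.fst)
  rwa [card_toEnumFinset, ← sum_eq_sum_toEnumFinset, ← hsum (· ^ 2)] at h

theorem esymm_map_inv_mul_prod {K : Type*} [Field K] {s : Multiset K} (hs : (0 : K) ∉ s)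
    {k j : ℕ} (hkj : k + j = card s) : (s.map (·⁻¹)).esymm k * s.prod = s.esymm j := by
  induction s using Multiset.induction_on generalizing k j with
  | empty =>
    obtain ⟨rfl, rfl⟩ : k = 0 ∧ j = 0 := by simpa using hkj
    simp [esymm_zero]
  | cons a s ih =>
    have ha : a ≠ 0 := fun h => hs (h ▸ mem_cons_self a s)
    have hs : (0 : K) ∉ s := fun h => hs (mem_cons_of_mem h)
    rw [card_cons] at hkj
    rw [map_cons, prod_cons]
    rcases k with _ | k
    · rw [zero_add] at hkj
      rw [esymm_zero, one_mul, hkj, ← card_cons, esymm_card, prod_cons]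
    rw [esymm_cons, add_mul]
    rcases j with _ | j
    · rw [esymm_eq_zero_of_card_lt (k := k + 1) (by simp; omega), zero_mul, zero_add, esymm_zero,
        mul_mul_mul_comm, inv_mul_cancel₀ ha, one_mul, ih hs (j := 0) (by omega), esymm_zero]
    · rw [esymm_cons, mul_mul_mul_comm, inv_mul_cancel₀ ha, one_mul, mul_left_comm,
        ih hs (by omega : k + 1 + j = card s), ih hs (by omega : k + (j + 1) = card s), add_comm]

theorem splits_derivative_prod_X_sub_C (s : Multiset ℝ) :
    (derivative (s.map (X - C ·)).prod).Splits :=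
  (splits_iff_card_roots.2 (by
    rw [roots_multiset_prod_X_sub_C, natDegree_multiset_prod_X_sub_C_eq_card])).derivative

theorem card_roots_derivative_prod_X_sub_C (s : Multiset ℝ) :
    card (derivative (s.map (X - C ·)).prod).roots = card s - 1 := by
  rw [splits_iff_card_roots.1 (splits_derivative_prod_X_sub_C s), natDegree_derivative,
    natDegree_multiset_prod_X_sub_C_eq_card]

theorem card_mul_esymm_roots_derivative (s : Multiset ℝ) {k : ℕ} (hk : k < card s) :
    (card s : ℝ) * (derivative (s.map (X - C ·)).prod).roots.esymm k =
      ((card s - k : ℕ) : ℝ) * s.esymm k := by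
  set n := card s
  set P := (s.map (X - C ·)).prod
  have hPdeg : P.natDegree = n := natDegree_multiset_prod_X_sub_C_eq_card s
  have hPlead : P.leadingCoeff = 1 := monic_multiset_prod_of_monic _ _ fun a _ => monic_X_sub_C a
  have hvieta := coeff_eq_esymm_roots_of_splits (splits_derivative_prod_X_sub_C s)
    (k := n - 1 - k) (by simp [P, hPdeg])
  rw [coeff_derivative, prod_X_sub_C_coeff s (by omega), leadingCoeff_derivative, hPlead,
    natDegree_derivative, hPdeg] at hvieta
  have hk' : n - (n - 1 - k + 1) = k ∧ n - 1 - (n - 1 - k) = k := by omega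
  have hcast : ((n - 1 - k : ℕ) : ℝ) + 1 = ((n - k : ℕ) : ℝ) := by norm_cast; omega
  rw [hk'.1, hk'.2, hcast] at hvieta
  refine mul_left_cancel₀ (pow_ne_zero k (neg_ne_zero.2 one_ne_zero)) ?_
  linear_combination -hvieta

section esymmMean

variable {K : Type*} [Field K]

noncomputable def esymmMean (s : Multiset K) (k : ℕ) : K := s.esymm k / (card s).choose k

@[simp]
theorem esymmMean_zero (s : Multiset K) : s.esymmMean 0 = 1 := by
  simp [esymmMean, esymm_zero]

theorem esymmMean_eq_zero_of_card_lt {s : Multiset K} {k : ℕ} (h : card s < k) :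
    s.esymmMean k = 0 := by
  simp [esymmMean, esymm_eq_zero_of_card_lt h]

theorem esymmMean_pos [LinearOrder K] [IsStrictOrderedRing K] {s : Multiset K} {k : ℕ}
    (h : 0 < s.esymm k) : 0 < s.esymmMean k := by
  have hk : k ≤ card s := by
    by_contra! hk
    exact h.ne' (esymm_eq_zero_of_card_lt hk)
  exact div_pos h (by exact_mod_cast Nat.choose_pos hk)

theorem esymmMean_map_inv_mul_prod {s : Multiset K} (hs : (0 : K) ∉ s) {k j : ℕ}
    (hkj : k + j = card s) : (s.map (·⁻¹)).esymmMean k * s.prod = s.esymmMean j := by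
  rw [esymmMean, esymmMean, card_map, div_mul_eq_mul_div, esymm_map_inv_mul_prod hs hkj,
    ← Nat.choose_symm_of_eq_add hkj.symm]

end esymmMean

theorem esymmMean_roots_derivative_prod_X_sub_C (s : Multiset ℝ) {k : ℕ} (hk : k < card s) :
    (derivative (s.map (X - C ·)).prod).roots.esymmMean k = s.esymmMean k := by
  have hchoose :
      ((card s - 1).choose k : ℝ) * card s = (card s).choose k * ((card s - k : ℕ) : ℝ) := by
    have := Nat.choose_mul_succ_eq (card s - 1) k
    rw [Nat.sub_add_cancel (by omega)] at this
    exact_mod_cast this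
  rw [esymmMean, esymmMean, card_roots_derivative_prod_X_sub_C,
    div_eq_div_iff (by exact_mod_cast (Nat.choose_pos (by omega)).ne')
      (by exact_mod_cast (Nat.choose_pos hk.le).ne')]
  refine mul_right_cancel₀ (show ((card s - k : ℕ) : ℝ) ≠ 0 by norm_cast; omega) ?_
  linear_combination ((card s - 1).choose k : ℝ) * card_mul_esymm_roots_derivative s hk -
    (derivative (s.map (X - C ·)).prod).roots.esymm k * hchoose

theorem esymmMean_two_le_sq_esymmMean_one (s : Multiset ℝ) :
    s.esymmMean 2 ≤ s.esymmMean 1 ^ 2 := by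
  rcases lt_or_ge (card s) 2 with hs | hs
  · rw [esymmMean_eq_zero_of_card_lt hs]
    positivity
  have hn : (2 : ℝ) ≤ card s := by exact_mod_cast hs
  rw [esymmMean, esymmMean, Nat.cast_choose_two, Nat.choose_one_right, esymm_one, div_pow,
    div_le_div_iff₀ (by nlinarith) (by positivity)]
  nlinarith [sq_sum_le_card_mul_sum_sq s, sq_sum_eq_sum_sq_add_two_mul_esymm_two s]

theorem esymmMean_mul_esymmMean_le_sq_of_card_eq {s : Multiset ℝ} {k : ℕ}
    (hs : card s = k + 2) : s.esymmMean k * s.esymmMean (k + 2) ≤ s.esymmMean (k + 1) ^ 2 := by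
  by_cases h0 : (0 : ℝ) ∈ s
  · have htop : s.esymmMean (k + 2) = 0 := by
      rw [esymmMean, ← hs, esymm_card, prod_eq_zero h0, zero_div]
    rw [htop, mul_zero]
    positivity
  set t := s.map (·⁻¹)
  have hrev (i j : ℕ) (hij : i + j = k + 2) : s.esymmMean j = t.esymmMean i * s.prod :=
    (esymmMean_map_inv_mul_prod h0 (hij.trans hs.symm)).symm
  rw [hrev 2 k (by ring), hrev 0 (k + 2) (by ring), hrev 1 (k + 1) (by ring), esymmMean_zero]
  have := mul_le_mul_of_nonneg_right (esymmMean_two_le_sq_esymmMean_one t) (sq_nonneg s.prod)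
  linarith

theorem esymmMean_mul_esymmMean_le_sq (s : Multiset ℝ) (k : ℕ) :
    s.esymmMean k * s.esymmMean (k + 2) ≤ s.esymmMean (k + 1) ^ 2 := by
  induction hn : card s using Nat.strong_induction_on generalizing s with
  | _ n ih =>
  rcases lt_trichotomy n (k + 2) with hlt | heq | hgt
  · rw [esymmMean_eq_zero_of_card_lt (k := k + 2) (by omega), mul_zero]
    positivity
  · exact esymmMean_mul_esymmMean_le_sq_of_card_eq (hn.trans heq)
  · rw [← esymmMean_roots_derivative_prod_X_sub_C s (k := k) (by omega),
      ← esymmMean_roots_derivative_prod_X_sub_C s (k := k + 1) (by omega),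
      ← esymmMean_roots_derivative_prod_X_sub_C s (k := k + 2) (by omega)]
    exact ih (n - 1) (by omega) _ (by rw [card_roots_derivative_prod_X_sub_C, hn])

end Multiset

theorem pow_le_pow_succ_of_mul_le_sq {p : ℕ → ℝ} {m : ℕ} (h0 : p 0 = 1)
    (hpos : ∀ k ≤ m, 0 < p k) (hp : ∀ k, k + 2 ≤ m → p k * p (k + 2) ≤ p (k + 1) ^ 2) :
    ∀ k, k + 1 ≤ m → p (k + 1) ^ k ≤ p k ^ (k + 1)
  | 0, _ => by simp [h0]
  | k + 1, hk => by
    have ih := pow_le_pow_succ_of_mul_le_sq h0 hpos hp k (by omega)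
    have hk0 := hpos k (by omega)
    have hk2 := hpos (k + 2) hk
    refine le_of_mul_le_mul_right ?_ (pow_pos (hpos (k + 1) (by omega)) k)
    calc p (k + 2) ^ (k + 1) * p (k + 1) ^ k ≤ p (k + 2) ^ (k + 1) * p k ^ (k + 1) := by gcongr
      _ = (p k * p (k + 2)) ^ (k + 1) := by ring
      _ ≤ (p (k + 1) ^ 2) ^ (k + 1) := by gcongr; exact hp k hk
      _ = p (k + 1) ^ (k + 1 + 1) * p (k + 1) ^ k := by ring

theorem rpow_one_div_le_of_pow_le {x y : ℝ} (hx : 0 ≤ x) (hy : 0 ≤ y) {k : ℕ} (hk : k ≠ 0)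
    (h : x ^ k ≤ y ^ (k + 1)) : x ^ ((1 : ℝ) / (k + 1 : ℕ)) ≤ y ^ ((1 : ℝ) / k) := by
  rw [one_div, one_div]
  refine (pow_le_pow_iff_left₀ (by positivity) (by positivity)
    (mul_ne_zero hk k.succ_ne_zero)).1 ?_
  calc (x ^ ((k + 1 : ℕ) : ℝ)⁻¹) ^ (k * (k + 1))
      = ((x ^ ((k + 1 : ℕ) : ℝ)⁻¹) ^ (k + 1)) ^ k := by rw [← pow_mul, mul_comm]
    _ = x ^ k := by rw [Real.rpow_inv_natCast_pow hx k.succ_ne_zero]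
    _ ≤ y ^ (k + 1) := h
    _ = ((y ^ (k : ℝ)⁻¹) ^ k) ^ (k + 1) := by rw [Real.rpow_inv_natCast_pow hy hk]
    _ = (y ^ (k : ℝ)⁻¹) ^ (k * (k + 1)) := by rw [← pow_mul]

theorem antitoneOn_rpow_one_div_of_mul_le_sq {p : ℕ → ℝ} {m : ℕ} (h0 : p 0 = 1)
    (hpos : ∀ k ≤ m, 0 < p k) (hp : ∀ k, k + 2 ≤ m → p k * p (k + 2) ≤ p (k + 1) ^ 2) :
    AntitoneOn (fun k : ℕ => p k ^ ((1 : ℝ) / k)) (Set.Icc 1 m) := by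
  refine antitoneOn_of_succ_le Set.ordConnected_Icc fun k _ hk hk1 => ?_
  rw [Order.succ_eq_add_one] at hk1 ⊢
  exact rpow_one_div_le_of_pow_le (hpos _ hk1.2).le (hpos _ hk.2).le
    (Nat.one_le_iff_ne_zero.1 hk.1) (pow_le_pow_succ_of_mul_le_sq h0 hpos hp k hk1.2)

theorem maclaurin_inequality_general (n m : ℕ)
    (lam : Fin n → ℝ) (hlam : lam ∈ GammaCone n m)
    (j i : ℕ) (hj : 1 ≤ j) (hji : j ≤ i) (him : i ≤ m) :
    (symmS n i lam / (n.choose i : ℝ)) ^ ((1 : ℝ) / i) ≤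
      (symmS n j lam / (n.choose j : ℝ)) ^ ((1 : ℝ) / j) := by
  set s := (Finset.univ : Finset (Fin n)).val.map lam
  have hS (k : ℕ) : symmS n k lam = s.esymm k := (Finset.esymm_map_val lam _ k).symm
  have hmean (k : ℕ) : symmS n k lam / n.choose k = s.esymmMean k := by
    rw [hS, Multiset.esymmMean, Multiset.card_map, Finset.card_val, Finset.card_univ,
      Fintype.card_fin]
  have hpos (k : ℕ) (hk : k ≤ m) : 0 < s.esymmMean k := by
    rcases Nat.eq_zero_or_pos k with rfl | hk0
    · simp
    · exact Multiset.esymmMean_pos (hS k ▸ hlam k hk0 hk)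
  simp only [hmean]
  exact antitoneOn_rpow_one_div_of_mul_le_sq s.esymmMean_zero hpos
    (fun k _ => s.esymmMean_mul_esymmMean_le_sq k) ⟨hj, hji.trans him⟩ ⟨hj.trans hji, him⟩
    hji

/-- Maclaurin's inequality: if `λ ∈ Γᵐ` then for all `1 ≤ j ≤ i ≤ m`,
`(Sⱼ(λ)/C(n,j))^(1/j) ≥ (Sᵢ(λ)/C(n,i))^(1/i)`. -/
theorem maclaurin_inequality (n m : ℕ) (hmn : m ≤ n)
    (lam : Fin n → ℝ) (hlam : lam ∈ GammaCone n m)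
    (j i : ℕ) (hj : 1 ≤ j) (hji : j ≤ i) (him : i ≤ m) :
    (symmS n i lam / (n.choose i : ℝ)) ^ ((1 : ℝ) / i) ≤
      (symmS n j lam / (n.choose j : ℝ)) ^ ((1 : ℝ) / j) :=
  maclaurin_inequality_general n m lam hlam j i hj hji him
end

section
/- Kolodziej-type iteration lemma: let φ : (0, s₀) → ℝ be a monotone increasing function with lim_{s→0⁺} φ(s) = 0, φ(s) > 0 for s ∈ (0, s₀), and suppose there exist constants C₀ > 0 and δ₀ > 0 such that t·φ(s−t) ≤ C₀·φ(s)^(1+δ₀) for all 0 < t < s < s₀. Then φ(s₀) ≥ (s₀(1 − 2^(−δ₀))/(2C₀))^(1/δ₀). -/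
/-!
After taking `δ₀`-th roots the claim is `s₀ (1 - 2^{-δ₀}) ≤ 2 C₀ φ(s₀)^{δ₀}`. If it fails, put
`T = 2 C₀ φ(s₀)^{δ₀} / (1 - 2^{-δ₀}) < s₀` and pick `s₁ ∈ (T, s₀)`. Starting from `s₁`, step down by
`t = 2 C₀ φ(s)^{δ₀}`: the iteration inequality then halves `φ`, so the steps shrink by the factor
`2^{-δ₀}` and their total stays below `T`. Hence the points stay above `σ = s₁ - T > 0` while `φ`
tends to `0` along them, contradicting `0 < φ σ` and monotonicity.
-/

open Finset

theorem mul_geom_sum_le_div_one_sub {K : Type*} [Field K] [LinearOrder K] [IsStrictOrderedRing K]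
    {t r : K} (ht : 0 ≤ t) (hr0 : 0 ≤ r) (hr1 : r < 1) (m : ℕ) :
    t * ∑ j ∈ range m, r ^ j ≤ t / (1 - r) := by
  have hgeom := geom_sum_Ico_le_of_lt_one (m := 0) (n := m) hr0 hr1
  rw [← range_eq_Ico, pow_zero] at hgeom
  simpa only [mul_one_div] using mul_le_mul_of_nonneg_left hgeom ht

namespace KolodziejIteration

variable {φ : ℝ → ℝ} {C δ s₀ : ℝ}

theorem apply_right_pos (hs₀ : 0 < s₀) (hmono : MonotoneOn φ (Set.Ioc 0 s₀))
    (hpos : ∀ s, 0 < s → s < s₀ → 0 < φ s) : 0 < φ s₀ :=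
  (hpos _ (half_pos hs₀) (half_lt_self hs₀)).trans_le
    (hmono ⟨half_pos hs₀, (half_lt_self hs₀).le⟩ ⟨hs₀, le_rfl⟩ (half_lt_self hs₀).le)

theorem apply_sub_le_half (hC : 0 < C)
    (hpos : ∀ s, 0 < s → s < s₀ → 0 < φ s)
    (hiter : ∀ t s, 0 < t → t < s → s < s₀ → t * φ (s - t) ≤ C * φ s ^ (1 + δ))
    {s : ℝ} (hs : 0 < s) (hs₀ : s < s₀) (hts : 2 * C * φ s ^ δ < s) :
    φ (s - 2 * C * φ s ^ δ) ≤ φ s / 2 := by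
  have hφ := hpos s hs hs₀
  have ht : 0 < 2 * C * φ s ^ δ := by positivity
  refine le_of_mul_le_mul_left ?_ ht
  calc 2 * C * φ s ^ δ * φ (s - 2 * C * φ s ^ δ) ≤ C * φ s ^ (1 + δ) := hiter _ s ht hts hs₀
    _ = 2 * C * φ s ^ δ * (φ s / 2) := by rw [Real.rpow_add hφ, Real.rpow_one]; ring

theorem half_pow_mul_rpow {x : ℝ} (hx : 0 ≤ x) (k : ℕ) :
    ((1 / 2) ^ k * x) ^ δ = ((2 : ℝ) ^ (-δ)) ^ k * x ^ δ := by
  rw [Real.mul_rpow (by positivity) hx, ← Real.rpow_natCast, ← Real.rpow_natCast,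
    ← Real.rpow_mul (by positivity), ← Real.rpow_mul (by positivity), one_div,
    Real.inv_rpow (by positivity), ← Real.rpow_neg (by positivity)]
  ring_nf

theorem exists_apply_le_half_pow (hC : 0 < C) (hδ : 0 < δ)
    (hpos : ∀ s, 0 < s → s < s₀ → 0 < φ s)
    (hiter : ∀ t s, 0 < t → t < s → s < s₀ → t * φ (s - t) ≤ C * φ s ^ (1 + δ))
    {s₁ t₁ : ℝ} (hs₁0 : 0 < s₁) (hs₁ : s₁ < s₀) (ht₁ : 2 * C * φ s₁ ^ δ ≤ t₁)
    (hgap : t₁ / (1 - (2 : ℝ) ^ (-δ)) < s₁) (k : ℕ) :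
    ∃ s, s₁ - t₁ * ∑ j ∈ range k, ((2 : ℝ) ^ (-δ)) ^ j ≤ s ∧ s ≤ s₁ ∧
      φ s ≤ (1 / 2) ^ k * φ s₁ := by
  set r : ℝ := (2 : ℝ) ^ (-δ)
  have hr0 : 0 < r := by positivity
  have hr1 : r < 1 := Real.rpow_lt_one_of_one_lt_of_neg one_lt_two (neg_neg_of_pos hδ)
  have ht₁0 : 0 ≤ t₁ := le_trans (by have := hpos s₁ hs₁0 hs₁; positivity) ht₁
  have hpos_of_ge : ∀ (m : ℕ) (s : ℝ), s₁ - t₁ * ∑ j ∈ range m, r ^ j ≤ s → 0 < s :=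
    fun m s hs ↦ by linarith [mul_geom_sum_le_div_one_sub ht₁0 hr0.le hr1 m]
  induction k with
  | zero => exact ⟨s₁, by simp, le_rfl, by simp⟩
  | succ k ih =>
    obtain ⟨s, hs_lower, hs_upper, hφs⟩ := ih
    have hs0 := hpos_of_ge k s hs_lower
    have hs₀ : s < s₀ := hs_upper.trans_lt hs₁
    have hφs0 := hpos s hs0 hs₀
    have hstep : 2 * C * φ s ^ δ ≤ r ^ k * t₁ :=
      calc 2 * C * φ s ^ δ ≤ 2 * C * ((1 / 2) ^ k * φ s₁) ^ δ := by gcongr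
        _ = r ^ k * (2 * C * φ s₁ ^ δ) := by
            rw [half_pow_mul_rpow (hpos _ hs₁0 hs₁).le]; ring
        _ ≤ r ^ k * t₁ := by gcongr
    have hnext : s₁ - t₁ * ∑ j ∈ range (k + 1), r ^ j ≤ s - 2 * C * φ s ^ δ := by
      rw [sum_range_succ, mul_add]; linarith
    refine ⟨s - 2 * C * φ s ^ δ, hnext, by linarith [show 0 ≤ 2 * C * φ s ^ δ by positivity], ?_⟩
    calc φ (s - 2 * C * φ s ^ δ) ≤ φ s / 2 :=
          apply_sub_le_half hC hpos hiter hs0 hs₀ (by linarith [hpos_of_ge _ _ hnext])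
      _ ≤ (1 / 2) ^ (k + 1) * φ s₁ := by rw [pow_succ]; linarith

theorem mul_one_sub_le_two_mul_rpow (hs₀ : 0 < s₀) (hC : 0 < C) (hδ : 0 < δ)
    (hmono : MonotoneOn φ (Set.Ioc 0 s₀))
    (hpos : ∀ s, 0 < s → s < s₀ → 0 < φ s)
    (hiter : ∀ t s, 0 < t → t < s → s < s₀ → t * φ (s - t) ≤ C * φ s ^ (1 + δ)) :
    s₀ * (1 - (2 : ℝ) ^ (-δ)) ≤ 2 * C * φ s₀ ^ δ := by
  set r : ℝ := (2 : ℝ) ^ (-δ)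
  have hr0 : 0 < r := by positivity
  have hr1 : r < 1 := Real.rpow_lt_one_of_one_lt_of_neg one_lt_two (neg_neg_of_pos hδ)
  by_contra! hlt
  set t₀ := 2 * C * φ s₀ ^ δ
  have hT : t₀ / (1 - r) < s₀ := by rwa [div_lt_iff₀ (by linarith)]
  have ht₀0 : 0 ≤ t₀ := by
    have := Real.rpow_nonneg (apply_right_pos hs₀ hmono hpos).le δ
    positivity
  have hT0 : 0 ≤ t₀ / (1 - r) := div_nonneg ht₀0 (by linarith)
  set s₁ := (t₀ / (1 - r) + s₀) / 2
  set σ := s₁ - t₀ / (1 - r)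
  have hσ : 0 < σ := by simp only [σ, s₁]; linarith
  have hs₁ : s₁ < s₀ := by simp only [s₁]; linarith
  have hσs₁ : σ ≤ s₁ := by simp only [σ]; linarith
  have hφs₁ : 0 < φ s₁ := hpos s₁ (hσ.trans_le hσs₁) hs₁
  have ht₀ : 2 * C * φ s₁ ^ δ ≤ t₀ := by
    have := hmono ⟨hσ.trans_le hσs₁, hs₁.le⟩ ⟨hs₀, le_rfl⟩ hs₁.le
    exact mul_le_mul_of_nonneg_left (Real.rpow_le_rpow hφs₁.le this hδ.le) (by positivity)
  have hφσ_le : ∀ k : ℕ, φ σ ≤ (1 / 2) ^ k * φ s₁ := fun k ↦ by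
    obtain ⟨s, hs_lower, hs_upper, hφs⟩ :=
      exists_apply_le_half_pow hC hδ hpos hiter (hσ.trans_le hσs₁) hs₁ ht₀ (by linarith) k
    have hσs : σ ≤ s := by linarith [mul_geom_sum_le_div_one_sub ht₀0 hr0.le hr1 k]
    exact (hmono ⟨hσ, hσs₁.trans hs₁.le⟩ ⟨hσ.trans_le hσs, hs_upper.trans hs₁.le⟩ hσs).trans hφs
  have hlim : Filter.Tendsto (fun k : ℕ ↦ (1 / 2 : ℝ) ^ k * φ s₁) Filter.atTop (nhds 0) := by
    simpa using (tendsto_pow_atTop_nhds_zero_of_lt_one (r := (1 / 2 : ℝ)) (by norm_num)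
      (by norm_num)).mul_const (φ s₁)
  exact (ge_of_tendsto' hlim hφσ_le).not_gt (hpos σ hσ (hσs₁.trans_lt hs₁))

end KolodziejIteration

open KolodziejIteration in
theorem kolodziej_iteration_general (s₀ C₀ δ₀ : ℝ) (hs₀ : 0 < s₀) (hC₀ : 0 < C₀) (hδ₀ : 0 < δ₀)
    (φ : ℝ → ℝ)
    (hmono : MonotoneOn φ (Set.Ioc 0 s₀))
    (hpos : ∀ s, 0 < s → s < s₀ → 0 < φ s)
    (hiter : ∀ t s, 0 < t → t < s → s < s₀ → t * φ (s - t) ≤ C₀ * φ s ^ (1 + δ₀)) :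
    (s₀ * (1 - (2 : ℝ) ^ (-δ₀)) / (2 * C₀)) ^ ((1 : ℝ) / δ₀) ≤ φ s₀ := by
  have hφs₀ : 0 < φ s₀ := apply_right_pos hs₀ hmono hpos
  have hr1 : (2 : ℝ) ^ (-δ₀) ≤ 1 := Real.rpow_le_one_of_one_le_of_nonpos one_le_two (by linarith)
  have hbase : 0 ≤ s₀ * (1 - (2 : ℝ) ^ (-δ₀)) / (2 * C₀) :=
    div_nonneg (mul_nonneg hs₀.le (by linarith)) (by positivity)
  rw [one_div, Real.rpow_inv_le_iff_of_pos hbase hφs₀.le hδ₀, div_le_iff₀ (by positivity)]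
  linarith [mul_one_sub_le_two_mul_rpow hs₀ hC₀ hδ₀ hmono hpos hiter]

/-- Kolodziej-type iteration lemma: if `φ` is monotone increasing on `(0, s₀)`,
tends to `0` as `s → 0⁺`, is positive on `(0, s₀)`, and satisfies
`t·φ(s−t) ≤ C₀·φ(s)^(1+δ₀)` for all `0 < t < s < s₀`, then
`φ(s₀) ≥ (s₀(1 − 2^(−δ₀))/(2C₀))^(1/δ₀)`. -/
theorem kolodziej_iteration (s₀ C₀ δ₀ : ℝ) (hs₀ : 0 < s₀) (hC₀ : 0 < C₀) (hδ₀ : 0 < δ₀)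
    (φ : ℝ → ℝ)
    (hmono : MonotoneOn φ (Set.Ioc 0 s₀))
    (hlim : Filter.Tendsto φ (nhdsWithin 0 (Set.Ioi 0)) (nhds 0))
    (hpos : ∀ s, 0 < s → s < s₀ → 0 < φ s)
    (hiter : ∀ t s, 0 < t → t < s → s < s₀ → t * φ (s - t) ≤ C₀ * φ s ^ (1 + δ₀)) :
    (s₀ * (1 - (2 : ℝ) ^ (-δ₀)) / (2 * C₀)) ^ ((1 : ℝ) / δ₀) ≤ φ s₀ :=
  kolodziej_iteration_general s₀ C₀ δ₀ hs₀ hC₀ hδ₀ φ hmono hpos hiter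
end
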